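/- Let m ∈ ℕ with m ≥ 1 and set c := 1/exp_m(2·√((log(3/2))² + π²)). Then for every real s with 0 < s < c, every τ ∈ (−π, π) and every l ∈ {0,…,m−1}: log^{[l]}(−log s) is a positive real number, log^{[l]}(−log s − iτ) = log^{[l]}(−log(s·e^{iτ})) lies in ℂ⁻, and |log^{[l]}(−log s − iτ) − log^{[l]}(−log s)| < (1/2)·log^{[l]}(−log s). (This is the content of the Claim in the proof of Proposition 5.72 of the paper, namely that T_l(s,τ) = log_l(−log(s e^{iτ})) = log_l(−log s)·(1 + S_l(s,τ)) with |S_l(s,τ)| < 1/2.) -/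

import Mathlib

/-- The `j`-fold iterate `log^{[j]}` of the principal complex logarithm. -/
noncomputable def logIter : ℕ → ℂ → ℂ
  | 0, w => w
  | j + 1, w => Complex.log (logIter j w)

/-- The `j`-fold iterated real exponential `exp_j`. -/
noncomputable def expIter : ℕ → ℝ → ℝ
  | 0, x => x
  | j + 1, x => Real.exp (expIter j x)

/-!
Put `x = -log s` and `K = 2 √((log (3/2))² + π²) ≥ 2π`. The smallness of `s` makes every real
iterate `a_k = log^{[k]} x` with `k < m` exceed `K`. Writing `T_k = log^{[k]} (x - iτ)`, one shows
`‖T_k - a_k‖ < π` by induction: if `T_k = a_k (1 + u)` with `‖u‖ < π / a_k ≤ 1/2`, then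
`T_{k+1} - a_{k+1} = log (1 + u)` has norm at most `3/2 ‖u‖ < π`. Since `a_l > 2π`, the bound
`π` is below `a_l / 2`, which also keeps `T_l` in the right half-plane.
-/

open Complex

theorem logIter_succ (j : ℕ) (w : ℂ) : logIter (j + 1) w = log (logIter j w) := rfl

theorem expIter_eq_iterate (j : ℕ) : expIter j = Real.exp^[j] := by
  induction j with
  | zero => rfl
  | succ j ih => funext x; rw [Function.iterate_succ_apply', ← ih]; rfl

theorem self_le_iterate_exp (n : ℕ) (x : ℝ) : x ≤ Real.exp^[n] x :=
  Function.id_le_iterate_of_id_le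
    (fun y ↦ show y ≤ Real.exp y by linarith [Real.add_one_le_exp y]) n x

theorem lt_iterate_log_of_iterate_exp_lt {a y : ℝ} (k : ℕ) (h : Real.exp^[k] a < y) :
    a < Real.log^[k] y := by
  induction k generalizing a y with
  | zero => exact h
  | succ k ih =>
    rw [Function.iterate_succ_apply] at h
    rw [Function.iterate_succ_apply']
    have hexp := ih h
    exact (Real.lt_log_iff_exp_lt ((Real.exp_pos a).trans hexp)).2 hexp

theorem lt_iterate_log_of_iterate_exp_lt_of_le {a y : ℝ} {k n : ℕ} (hkn : k ≤ n)
    (h : Real.exp^[n] a < y) : a < Real.log^[k] y := by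
  rw [← Nat.add_sub_of_le hkn, Function.iterate_add_apply] at h
  exact (self_le_iterate_exp (n - k) a).trans_lt (lt_iterate_log_of_iterate_exp_lt k h)

theorem logIter_ofReal {x : ℝ} {n : ℕ} (hx : ∀ k < n, 0 ≤ Real.log^[k] x) :
    logIter n x = ↑(Real.log^[n] x) := by
  induction n with
  | zero => rfl
  | succ n ih =>
    rw [logIter_succ, ih fun k hk ↦ hx k (by omega), Function.iterate_succ_apply',
      ofReal_log (hx n n.lt_succ_self)]

theorem norm_log_sub_log_ofReal_le {a : ℝ} (ha : 0 < a) {T : ℂ} (hT : ‖T - a‖ ≤ a / 2) :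
    ‖log T - Real.log a‖ ≤ 3 / 2 * (‖T - a‖ / a) := by
  set u := (T - a) / a
  have hnorm_u : ‖u‖ = ‖T - a‖ / a := by simp [u, abs_of_pos ha]
  have hu : ‖u‖ ≤ 1 / 2 := by rw [hnorm_u, div_le_iff₀ ha]; linarith
  have hT_eq : T = a * (1 + u) := by
    have : (a : ℂ) ≠ 0 := ofReal_ne_zero.2 ha.ne'
    rw [mul_add, mul_one, mul_div_cancel₀ _ this, add_sub_cancel]
  have hu_ne : 1 + u ≠ 0 := by
    intro h
    have : ‖u‖ = 1 := by simp [eq_neg_of_add_eq_zero_right h]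
    linarith
  rw [← hnorm_u, hT_eq, log_ofReal_mul ha hu_ne, add_sub_cancel_left]
  exact norm_log_one_add_half_le_self hu

theorem norm_logIter_sub_iterate_log_lt_pi {x : ℝ} {w : ℂ} {n : ℕ} (hw : ‖w - x‖ < Real.pi)
    (hx : ∀ k < n, 2 * Real.pi ≤ Real.log^[k] x) :
    ‖logIter n w - ↑(Real.log^[n] x)‖ < Real.pi := by
  induction n with
  | zero => exact hw
  | succ n ih =>
    set a := Real.log^[n] x
    have ha : 2 * Real.pi ≤ a := hx n n.lt_succ_self
    have hT : ‖logIter n w - a‖ < Real.pi := ih fun k hk ↦ hx k (by omega)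
    have hratio : ‖logIter n w - a‖ / a ≤ 1 / 2 := by
      rw [div_le_iff₀ (by linarith [Real.pi_pos])]; linarith
    rw [logIter_succ, Function.iterate_succ_apply']
    calc ‖log (logIter n w) - ↑(Real.log a)‖
        ≤ 3 / 2 * (‖logIter n w - a‖ / a) :=
          norm_log_sub_log_ofReal_le (by linarith [Real.pi_pos]) (by linarith)
      _ ≤ 3 / 2 * (1 / 2) := by gcongr
      _ < Real.pi := by linarith [Real.pi_gt_three]

theorem mem_slitPlane_of_norm_sub_ofReal_lt {a : ℝ} {z : ℂ} (h : ‖z - a‖ < a) :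
    z ∈ slitPlane := by
  have hre := abs_lt.1 ((abs_re_le_norm (z - a)).trans_lt h)
  rw [sub_re, ofReal_re] at hre
  exact mem_slitPlane_iff.2 (Or.inl (by linarith [hre.1]))

theorem log_ofReal_mul_exp_mul_I {s τ : ℝ} (hs : 0 < s) (hτ₁ : -Real.pi < τ)
    (hτ₂ : τ ≤ Real.pi) : log (s * exp (I * τ)) = Real.log s + I * τ := by
  rw [log_ofReal_mul hs (exp_ne_zero _), log_exp] <;> simpa

theorem logIter_neg_log_sub_I_tau_general (m : ℕ)
    (c : ℝ) (hc : c = 1 / expIter m (2 * Real.sqrt ((Real.log (3 / 2)) ^ 2 + Real.pi ^ 2)))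
    (s : ℝ) (hs : 0 < s) (hsc : s < c)
    (τ : ℝ) (hτ₁ : -Real.pi < τ) (hτ₂ : τ < Real.pi)
    (l : ℕ) (hl : l < m) :
    (logIter l (-(Real.log s : ℂ))).im = 0 ∧
    0 < (logIter l (-(Real.log s : ℂ))).re ∧
    logIter l (-(Real.log s : ℂ) - Complex.I * (τ : ℂ)) =
      logIter l (-Complex.log ((s : ℂ) * Complex.exp (Complex.I * (τ : ℂ)))) ∧
    logIter l (-(Real.log s : ℂ) - Complex.I * (τ : ℂ)) ∈ Complex.slitPlane ∧
    ‖logIter l (-(Real.log s : ℂ) - Complex.I * (τ : ℂ)) -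
        logIter l (-(Real.log s : ℂ))‖ <
      (1 / 2) * (logIter l (-(Real.log s : ℂ))).re := by
  set K := 2 * Real.sqrt ((Real.log (3 / 2)) ^ 2 + Real.pi ^ 2)
  have hK : 2 * Real.pi ≤ K := by
    have : Real.pi ≤ Real.sqrt ((Real.log (3 / 2)) ^ 2 + Real.pi ^ 2) :=
      Real.le_sqrt_of_sq_le (le_add_of_nonneg_left (sq_nonneg _))
    linarith
  have hthreshold : Real.exp^[m] K < s⁻¹ := by
    have hpos : 0 < Real.exp^[m] K :=
      (by linarith [Real.pi_pos] : 0 < K).trans_le (self_le_iterate_exp m K)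
    rwa [hc, expIter_eq_iterate, one_div, lt_inv_comm₀ hs hpos] at hsc
  set x := -Real.log s with hx
  have hx_eq : -(Real.log s : ℂ) = x := by push_cast [hx]; rfl
  have hbig : ∀ k ≤ l, 2 * Real.pi < Real.log^[k] x := fun k hk ↦ by
    have := lt_iterate_log_of_iterate_exp_lt_of_le (k := k + 1) (by omega) hthreshold
    rw [Function.iterate_succ_apply, Real.log_inv] at this
    linarith
  have hreal := logIter_ofReal (n := l) fun k hk ↦ by linarith [hbig k hk.le, Real.pi_pos]
  have hτ : ‖(↑x - I * τ) - ↑x‖ < Real.pi := by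
    rw [sub_sub_cancel_left, norm_neg, norm_mul, norm_I, one_mul, norm_real, Real.norm_eq_abs,
      abs_lt]
    exact ⟨hτ₁, hτ₂⟩
  have hnear := norm_logIter_sub_iterate_log_lt_pi hτ fun k hk ↦ (hbig k hk.le).le
  have hl_big := hbig l le_rfl
  rw [hx_eq, hreal, ofReal_re, ofReal_im]
  refine ⟨rfl, by linarith [Real.pi_pos], ?_, ?_, by linarith⟩
  · rw [log_ofReal_mul_exp_mul_I hs hτ₁ hτ₂.le, hx]; push_cast; congr 1; ring
  · exact mem_slitPlane_of_norm_sub_ofReal_lt (by linarith [Real.pi_pos])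

/-- The Claim in the proof of **Proposition 5.72**: let `m ≥ 1` and
`c := 1 / exp_m (2 * √((log (3/2))² + π²))`. Then for every real `0 < s < c`, every
`τ ∈ (-π, π)` and every `l ∈ {0,…,m-1}`: `log^{[l]} (-log s)` is a positive real,
`log^{[l]} (-log s - iτ) = log^{[l]} (-log (s·e^{iτ}))` lies in the slit plane `ℂ⁻`,
and `|log^{[l]} (-log s - iτ) - log^{[l]} (-log s)| < (1/2) · log^{[l]} (-log s)`. -/
theorem logIter_neg_log_sub_I_tau (m : ℕ) (hm : 1 ≤ m)
    (c : ℝ) (hc : c = 1 / expIter m (2 * Real.sqrt ((Real.log (3 / 2)) ^ 2 + Real.pi ^ 2)))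
    (s : ℝ) (hs : 0 < s) (hsc : s < c)
    (τ : ℝ) (hτ₁ : -Real.pi < τ) (hτ₂ : τ < Real.pi)
    (l : ℕ) (hl : l < m) :
    (logIter l (-(Real.log s : ℂ))).im = 0 ∧
    0 < (logIter l (-(Real.log s : ℂ))).re ∧
    logIter l (-(Real.log s : ℂ) - Complex.I * (τ : ℂ)) =
      logIter l (-Complex.log ((s : ℂ) * Complex.exp (Complex.I * (τ : ℂ)))) ∧
    logIter l (-(Real.log s : ℂ) - Complex.I * (τ : ℂ)) ∈ Complex.slitPlane ∧
    ‖logIter l (-(Real.log s : ℂ) - Complex.I * (τ : ℂ)) -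
        logIter l (-(Real.log s : ℂ))‖ <
      (1 / 2) * (logIter l (-(Real.log s : ℂ))).re :=
  logIter_neg_log_sub_I_tau_general m c hc s hs hsc τ hτ₁ hτ₂ l hl
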